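/- Let l ≥ 2, let a_1, …, a_l, u, v be real numbers, and let T be the l×l tridiagonal matrix with diagonal entries a_1, …, a_l, entries −1 immediately above and below the diagonal, and 0 elsewhere. Let B be the (l+1)×(l+1) symmetric matrix whose first row and first column equal (0, u, 0, …, 0, v) and whose lower-right l×l block is T. Then −det B = u²·D(a_2, …, a_l) + 2uv + v²·D(a_1, …, a_{l−1}). -/

import Mathlib

open Matrix

/-- Tridiagonal determinant `D(a_1, …, a_n)` over ℝ. -/
noncomputable def Dr : List ℝ → ℝ
  | [] => 1
  | [a] => a
  | a :: b :: l => a * Dr (b :: l) - Dr l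

/-- The `l×l` tridiagonal matrix with diagonal entries `a_1, …, a_l` and entries `−1`
immediately above and below the diagonal. -/
def tridiagR {l : ℕ} (a : Fin l → ℝ) : Matrix (Fin l) (Fin l) ℝ :=
  Matrix.of fun i j =>
    if i = j then a i
    else if (i : ℕ) + 1 = (j : ℕ) ∨ (j : ℕ) + 1 = (i : ℕ) then -1 else 0

/-- The `(l+1)×(l+1)` symmetric matrix whose first row and column equal
`(0, u, 0, …, 0, v)` and whose lower-right `l×l` block is the tridiagonal matrix `T`. -/
noncomputable def borderedT {l : ℕ} (a : Fin l → ℝ) (u v : ℝ) :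
    Matrix (Option (Fin l)) (Option (Fin l)) ℝ :=
  Matrix.of fun p q =>
    match p, q with
    | none, none => 0
    | none, some j => if (j : ℕ) = 0 then u else if (j : ℕ) = l - 1 then v else 0
    | some j, none => if (j : ℕ) = 0 then u else if (j : ℕ) = l - 1 then v else 0
    | some j, some j' => tridiagR a j j'

/-!
Expanding along the first row and then along the first column shows that a matrix with corner
`x`, first row `(x, r)`, first column `(x, c)` and lower-right block `M` has determinant
`x * det M - r ⬝ᵥ adj M *ᵥ c`. For `B` the border is `w = u e₁ + v eₗ`, so
`-det B = u² adj(T)₁₁ + u v (adj(T)₁ₗ + adj(T)ₗ₁) + v² adj(T)ₗₗ`. The diagonal cofactors are the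
determinants of the trailing and leading `(l-1)×(l-1)` blocks of `T`, which are again
tridiagonal, and the off-diagonal cofactors are `1`, since the corresponding minors are
triangular with diagonal `-1`. The same bordering formula, applied to `T` with border `-e₁`,
gives the recursion `D(a₁, …, aₙ) = a₁ D(a₂, …, aₙ) - D(a₃, …, aₙ)` for `det T`.
-/

namespace Matrix

variable {R : Type*} {n : ℕ}

def bordered (x : R) (r c : Fin n → R) (M : Matrix (Fin n) (Fin n) R) :
    Matrix (Fin (n + 1)) (Fin (n + 1)) R :=
  of (Fin.cons (Fin.cons x r) fun i => Fin.cons (c i) (M i))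

@[simp] lemma bordered_zero_zero (x : R) (r c : Fin n → R) (M : Matrix (Fin n) (Fin n) R) :
    bordered x r c M 0 0 = x := rfl

@[simp] lemma bordered_zero_succ (x : R) (r c : Fin n → R) (M : Matrix (Fin n) (Fin n) R)
    (j : Fin n) : bordered x r c M 0 j.succ = r j := rfl

@[simp] lemma bordered_succ_zero (x : R) (r c : Fin n → R) (M : Matrix (Fin n) (Fin n) R)
    (i : Fin n) : bordered x r c M i.succ 0 = c i := rfl

@[simp] lemma bordered_succ_succ (x : R) (r c : Fin n → R) (M : Matrix (Fin n) (Fin n) R)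
    (i j : Fin n) : bordered x r c M i.succ j.succ = M i j := rfl

variable [CommRing R]

lemma det_bordered (x : R) (r c : Fin n → R) (M : Matrix (Fin n) (Fin n) R) :
    (bordered x r c M).det = x * M.det - r ⬝ᵥ (adjugate M *ᵥ c) := by
  rcases n with _ | n
  · simp [det_unique]
  have minor (k : Fin (n + 1)) :
      ((bordered x r c M).submatrix Fin.succ k.succ.succAbove).det =
        ∑ i : Fin (n + 1), (-1) ^ (i : ℕ) * c i * (M.submatrix i.succAbove k.succAbove).det := by
    rw [det_succ_column_zero]
    refine Fintype.sum_congr _ _ fun i => ?_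
    simp only [submatrix_apply, Fin.succ_succAbove_zero, bordered_succ_zero, submatrix_submatrix]
    congr 2
    ext i' j'
    simp [Fin.succ_succAbove_succ]
  rw [det_succ_row_zero, Fin.sum_univ_succ]
  have corner : (bordered x r c M).submatrix Fin.succ Fin.succ = M := rfl
  simp only [Fin.succAbove_zero, minor, corner, bordered_zero_zero, bordered_zero_succ,
    Fin.val_zero, pow_zero, one_mul, dotProduct, mulVec, adjugate_fin_succ_eq_det_submatrix,
    Finset.mul_sum, ← Finset.sum_neg_distrib, sub_eq_add_neg]
  congr 1
  refine Fintype.sum_congr _ _ fun k => Fintype.sum_congr _ _ fun i => ?_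
  rw [Fin.val_succ, pow_succ, pow_add]
  ring

lemma adjugate_zero_zero (M : Matrix (Fin (n + 1)) (Fin (n + 1)) R) :
    adjugate M 0 0 = (M.submatrix Fin.succ Fin.succ).det := by
  simp [adjugate_fin_succ_eq_det_submatrix]

lemma adjugate_last_last (M : Matrix (Fin (n + 1)) (Fin (n + 1)) R) :
    adjugate M (Fin.last n) (Fin.last n) = (M.submatrix Fin.castSucc Fin.castSucc).det := by
  simp [adjugate_fin_succ_eq_det_submatrix, ← two_mul]

lemma adjugate_zero_last (M : Matrix (Fin (n + 1)) (Fin (n + 1)) R) :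
    adjugate M 0 (Fin.last n) = (-1) ^ n * (M.submatrix Fin.castSucc Fin.succ).det := by
  simp [adjugate_fin_succ_eq_det_submatrix]

end Matrix

lemma List.tail_ofFn {α : Type*} {n : ℕ} (a : Fin (n + 1) → α) :
    (List.ofFn a).tail = List.ofFn (Fin.tail a) := by
  rw [List.ofFn_succ]
  rfl

lemma List.take_ofFn_eq_ofFn_init {α : Type*} {n : ℕ} (a : Fin (n + 1) → α) :
    (List.ofFn a).take n = List.ofFn (Fin.init a) := by
  rw [← Fin.ofFn_take_eq_take_ofFn n.le_succ, Fin.take_eq_init]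

lemma tridiagR_transpose {l : ℕ} (a : Fin l → ℝ) : (tridiagR a)ᵀ = tridiagR a := by
  ext i j
  simp only [transpose_apply, tridiagR, of_apply, eq_comm (a := j), or_comm]
  split_ifs with h <;> simp [h]

lemma tridiagR_submatrix_succ {n : ℕ} (a : Fin (n + 1) → ℝ) :
    (tridiagR a).submatrix Fin.succ Fin.succ = tridiagR (Fin.tail a) := by
  ext i j
  simp [tridiagR, Fin.tail]

lemma tridiagR_submatrix_castSucc {n : ℕ} (a : Fin (n + 1) → ℝ) :
    (tridiagR a).submatrix Fin.castSucc Fin.castSucc = tridiagR (Fin.init a) := by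
  ext i j
  simp [tridiagR, Fin.init]

lemma det_tridiagR_submatrix_castSucc_succ {n : ℕ} (a : Fin (n + 1) → ℝ) :
    ((tridiagR a).submatrix Fin.castSucc Fin.succ).det = (-1) ^ n := by
  rw [det_of_isLowerTriangular]
  · simp [tridiagR, Fin.ext_iff]
  · intro i j hij
    have hij : (i : ℕ) < j := hij
    simp only [submatrix_apply, tridiagR, of_apply, Fin.ext_iff, Fin.val_castSucc, Fin.val_succ]
    rw [if_neg (by omega), if_neg (by omega)]

lemma tridiagR_eq_bordered {n : ℕ} (a : Fin (n + 2) → ℝ) :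
    tridiagR a = bordered (a 0) (Pi.single 0 (-1)) (Pi.single 0 (-1)) (tridiagR (Fin.tail a)) := by
  ext i j
  induction i using Fin.cases <;> induction j using Fin.cases
  · simp [tridiagR]
  · rename_i j
    rw [bordered_zero_succ, Pi.single_apply, tridiagR, of_apply, if_neg (Fin.succ_ne_zero j).symm]
    rcases Fin.eq_zero_or_eq_succ j with rfl | ⟨k, rfl⟩ <;> simp
  · rename_i i
    rw [bordered_succ_zero, Pi.single_apply, tridiagR, of_apply, if_neg (Fin.succ_ne_zero i)]
    rcases Fin.eq_zero_or_eq_succ i with rfl | ⟨k, rfl⟩ <;> simp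
  · simp [tridiagR, Fin.tail, Fin.ext_iff]

lemma det_tridiagR : ∀ {n : ℕ} (a : Fin n → ℝ), (tridiagR a).det = Dr (List.ofFn a)
  | 0, a => by simp [Dr]
  | 1, a => by simp [tridiagR, Dr]
  | n + 2, a => by
    rw [tridiagR_eq_bordered, det_bordered]
    simp only [single_dotProduct, mulVec_single, Pi.smul_apply, col_apply, op_smul_eq_mul]
    rw [adjugate_zero_zero, tridiagR_submatrix_succ, det_tridiagR, det_tridiagR]
    simp only [List.ofFn_succ, Fin.tail_def, Dr]
    ring

lemma adjugate_tridiagR_zero_zero {n : ℕ} (a : Fin (n + 1) → ℝ) :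
    adjugate (tridiagR a) 0 0 = Dr (List.ofFn (Fin.tail a)) := by
  rw [adjugate_zero_zero, tridiagR_submatrix_succ, det_tridiagR]

lemma adjugate_tridiagR_last_last {n : ℕ} (a : Fin (n + 1) → ℝ) :
    adjugate (tridiagR a) (Fin.last n) (Fin.last n) = Dr (List.ofFn (Fin.init a)) := by
  rw [adjugate_last_last, tridiagR_submatrix_castSucc, det_tridiagR]

lemma adjugate_tridiagR_zero_last {n : ℕ} (a : Fin (n + 2) → ℝ) :
    adjugate (tridiagR a) 0 (Fin.last (n + 1)) = 1 := by
  rw [adjugate_zero_last, det_tridiagR_submatrix_castSucc_succ, ← pow_add, ← two_mul,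
    pow_mul, neg_one_sq, one_pow]

lemma adjugate_tridiagR_last_zero {n : ℕ} (a : Fin (n + 2) → ℝ) :
    adjugate (tridiagR a) (Fin.last (n + 1)) 0 = 1 := by
  rw [← transpose_apply (adjugate _), adjugate_transpose, tridiagR_transpose,
    adjugate_tridiagR_zero_last]

lemma borderedT_submatrix_finSuccEquiv {n : ℕ} (a : Fin (n + 2) → ℝ) (u v : ℝ) :
    (borderedT a u v).submatrix (finSuccEquiv _) (finSuccEquiv _) =
      bordered 0 (Pi.single 0 u + Pi.single (Fin.last (n + 1)) v)
        (Pi.single 0 u + Pi.single (Fin.last (n + 1)) v) (tridiagR a) := by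
  ext i j
  induction i using Fin.cases <;> induction j using Fin.cases <;> try rfl
  all_goals
    simp only [submatrix_apply, finSuccEquiv_zero, finSuccEquiv_succ, borderedT, of_apply,
      bordered_zero_succ, bordered_succ_zero, Pi.add_apply, Pi.single_apply, Fin.ext_iff,
      Fin.val_zero, Fin.val_last]
    split_ifs <;> first | omega | simp

/-- `−det B = u²·D(a_2, …, a_l) + 2uv + v²·D(a_1, …, a_{l−1})`. -/
theorem stmt8 (l : ℕ) (hl : 2 ≤ l) (a : Fin l → ℝ) (u v : ℝ) :
    -(borderedT a u v).det =
      u ^ 2 * Dr (List.ofFn a).tail + 2 * u * v +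
        v ^ 2 * Dr ((List.ofFn a).take (l - 1)) := by
  obtain ⟨n, rfl⟩ : ∃ n, l = n + 2 := ⟨l - 2, by omega⟩
  rw [← det_submatrix_equiv_self (finSuccEquiv _), borderedT_submatrix_finSuccEquiv,
    det_bordered, List.tail_ofFn, show n + 2 - 1 = n + 1 from rfl,
    List.take_ofFn_eq_ofFn_init]
  simp only [dotProduct_add, add_dotProduct, mulVec_add, single_dotProduct, mulVec_single,
    Pi.smul_apply, col_apply, op_smul_eq_mul, adjugate_tridiagR_zero_zero,
    adjugate_tridiagR_last_last, adjugate_tridiagR_zero_last, adjugate_tridiagR_last_zero]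
  ring
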